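/- arXiv:1802.09258 — 6 statements merged into one kernel-verified Lean document; each statement's English description precedes it below -/
import Mathlib

section
/- Let A be a matrix in SL₂(ℤ) that is loxodromic, i.e. |tr A| > 2. Then there exists a matrix P ∈ GL₂(ℤ) such that either P A P⁻¹ or P (−A) P⁻¹ has all four entries nonnegative. -/
open Matrix

/-- A matrix is "good" if some `GL₂(ℤ)`-conjugate of it has all entries nonnegative. -/
def GoodM (A : Matrix (Fin 2) (Fin 2) ℤ) : Prop :=
  ∃ P : (Matrix (Fin 2) (Fin 2) ℤ)ˣ,
    ∀ i j, 0 ≤ ((P : Matrix (Fin 2) (Fin 2) ℤ) * A * (↑P⁻¹ : Matrix (Fin 2) (Fin 2) ℤ)) i j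

lemma good_base (a b c d : ℤ) (ha : 0 ≤ a) (hb : 0 ≤ b) (hc : 0 ≤ c) (hd : 0 ≤ d) :
    GoodM !![a, b; c, d] := by
  refine ⟨1, fun i j => ?_⟩
  simp only [Units.val_one, inv_one, one_mul, mul_one]
  fin_cases i <;> fin_cases j <;> simpa

lemma good_conj (U V : Matrix (Fin 2) (Fin 2) ℤ) (hUV : U * V = 1) (hVU : V * U = 1)
    (A : Matrix (Fin 2) (Fin 2) ℤ) (h : GoodM (U * A * V)) : GoodM A := by
  obtain ⟨P, hP⟩ := h
  refine ⟨P * ⟨U, V, hUV, hVU⟩, fun i j => ?_⟩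
  have e1 : (↑(P * ⟨U, V, hUV, hVU⟩)⁻¹ : Matrix (Fin 2) (Fin 2) ℤ)
      = V * (↑P⁻¹ : Matrix (Fin 2) (Fin 2) ℤ) := by
    rw [_root_.mul_inv_rev, Units.inv_mk, Units.val_mul]
  have e2 : ((P * ⟨U, V, hUV, hVU⟩ : (Matrix (Fin 2) (Fin 2) ℤ)ˣ) : Matrix (Fin 2) (Fin 2) ℤ)
      = (P : Matrix (Fin 2) (Fin 2) ℤ) * U := by
    rw [Units.val_mul]
  rw [e1, e2, show ((P : Matrix (Fin 2) (Fin 2) ℤ) * U) * A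
      * (V * (↑P⁻¹ : Matrix (Fin 2) (Fin 2) ℤ))
      = (P : Matrix (Fin 2) (Fin 2) ℤ) * (U * A * V) * (↑P⁻¹ : Matrix (Fin 2) (Fin 2) ℤ) by
    noncomm_ring]
  exact hP i j

lemma moveS (a b c d : ℤ) (h : GoodM !![d, c; b, a]) : GoodM !![a, b; c, d] := by
  refine good_conj !![0,1;1,0] !![0,1;1,0] ?_ ?_ _ ?_
  · rw [Matrix.mul_fin_two, Matrix.one_fin_two]; norm_num
  · rw [Matrix.mul_fin_two, Matrix.one_fin_two]; norm_num
  · rw [show !![(0:ℤ),1;1,0] * !![a,b;c,d] * !![0,1;1,0] = !![d,c;b,a] by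
      rw [Matrix.mul_fin_two, Matrix.mul_fin_two]; norm_num]
    exact h

lemma moveD (a b c d : ℤ) (h : GoodM !![a, -b; -c, d]) : GoodM !![a, b; c, d] := by
  refine good_conj !![1,0;0,-1] !![1,0;0,-1] ?_ ?_ _ ?_
  · rw [Matrix.mul_fin_two, Matrix.one_fin_two]; norm_num
  · rw [Matrix.mul_fin_two, Matrix.one_fin_two]; norm_num
  · rw [show !![(1:ℤ),0;0,-1] * !![a,b;c,d] * !![1,0;0,-1] = !![a,-b;-c,d] by
      rw [Matrix.mul_fin_two, Matrix.mul_fin_two]; ring_nf]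
    exact h

lemma moveT (n a b c d : ℤ)
    (h : GoodM !![a + n*c, b + n*(d-a) - n^2*c; c, d - n*c]) : GoodM !![a, b; c, d] := by
  refine good_conj !![1,n;0,1] !![1,-n;0,1] ?_ ?_ _ ?_
  · rw [Matrix.mul_fin_two, Matrix.one_fin_two]; norm_num
  · rw [Matrix.mul_fin_two, Matrix.one_fin_two]; norm_num
  · rw [show !![(1:ℤ),n;0,1] * !![a,b;c,d] * !![1,-n;0,1]
        = !![a + n*c, b + n*(d-a) - n^2*c; c, d - n*c] by
      rw [Matrix.mul_fin_two, Matrix.mul_fin_two]; ring_nf]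
    exact h

/-- Case `b*c ≥ 0`: the diagonal is positive, and a diagonal sign flip finishes. -/
lemma good_of_bc_nonneg (a b c d : ℤ) (htr : 3 ≤ a + d) (hdet : a * d - b * c = 1)
    (hbc : 0 ≤ b * c) : GoodM !![a, b; c, d] := by
  have had : 1 ≤ a * d := by linarith
  have ha : 0 < a := by
    by_contra h
    push_neg at h
    have hd : 0 ≤ d := by linarith
    nlinarith [mul_nonneg (neg_nonneg.2 h) hd]
  have hd : 0 < d := by
    by_contra h
    push_neg at h
    nlinarith [mul_nonneg ha.le (neg_nonneg.2 h)]
  rcases le_or_gt 0 b with hb | hb <;> rcases le_or_gt 0 c with hc | hc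
  · exact good_base a b c d ha.le hb hc hd.le
  · have h1 : b * c = 0 := le_antisymm (mul_nonpos_iff.2 (Or.inl ⟨hb, hc.le⟩)) hbc
    have hb0 : b = 0 := by
      rcases mul_eq_zero.1 h1 with h | h
      · exact h
      · omega
    subst hb0
    exact moveD a 0 c d (good_base a (-0) (-c) d ha.le (by norm_num) (by linarith) hd.le)
  · have h1 : b * c = 0 := le_antisymm (mul_nonpos_iff.2 (Or.inr ⟨hb.le, hc⟩)) hbc
    have hc0 : c = 0 := by
      rcases mul_eq_zero.1 h1 with h | h
      · omega
      · exact h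
    subst hc0
    exact moveD a b 0 d (good_base a (-b) (-0) d ha.le (by linarith) (by norm_num) hd.le)
  · exact moveD a b c d (good_base a (-b) (-c) d ha.le (by linarith) (by linarith) hd.le)

/-- The descent step, assuming normalized signs `0 < b`, `c < 0`, `-c ≤ b`. -/
lemma good_descent (k : ℕ)
    (ih : ∀ a b c d : ℤ, b.natAbs + c.natAbs ≤ k → 3 ≤ a + d → a * d - b * c = 1 →
      GoodM !![a, b; c, d])
    (a b c d : ℤ) (hb : 0 < b) (hc : c < 0) (hcb : -c ≤ b)
    (hk : b.natAbs + c.natAbs ≤ k + 1) (htr : 3 ≤ a + d) (hdet : a * d - b * c = 1) :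
    GoodM !![a, b; c, d] := by
  set β : ℤ := -c with hβ
  have hβpos : 0 < β := by omega
  set n : ℤ := (a - d + β) / (2 * β) with hn
  set r : ℤ := (a - d + β) % (2 * β) with hr
  have hdiv : 2 * β * n + r = a - d + β := Int.mul_ediv_add_emod _ _
  have hr0 : 0 ≤ r := Int.emod_nonneg _ (by positivity)
  have hr1 : r < 2 * β := Int.emod_lt_of_pos _ (by linarith)
  set s : ℤ := β - r with hs
  have hsn : 2 * β * n = a - d + s := by omega
  set b' : ℤ := b + n * (d - a) - n ^ 2 * c with hb'
  have hkey : 4 * β * b' = s ^ 2 - (a + d) ^ 2 + 4 := by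
    have h1 : s = 2 * β * n - (a - d) := by omega
    rw [hb', h1, hβ]
    linear_combination 4 * hdet
  have hs2 : s ^ 2 ≤ β ^ 2 := by nlinarith [mul_nonneg hr0 (by linarith : (0:ℤ) ≤ 2 * β - r)]
  have htr9 : 9 ≤ (a + d) ^ 2 := by nlinarith
  have hb'lt : b' < β := by nlinarith [hkey, hs2, htr9]
  apply moveT n
  have htr' : 3 ≤ (a + n * c) + (d - n * c) := by linarith
  have hdet' : (a + n * c) * (d - n * c) - (b + n * (d - a) - n ^ 2 * c) * c = 1 := by
    linear_combination hdet
  rcases le_or_gt b' 0 with h0 | h0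
  · apply good_of_bc_nonneg _ _ _ _ htr' hdet'
    have : 0 ≤ b' * c := mul_nonneg_iff.2 (Or.inr ⟨h0, hc.le⟩)
    rwa [hb'] at this
  · have hmeas : (b + n * (d - a) - n ^ 2 * c).natAbs + c.natAbs ≤ k := by
      rw [← hb']
      omega
    exact ih _ _ _ _ hmeas htr' hdet'

lemma good_main : ∀ k : ℕ, ∀ a b c d : ℤ, b.natAbs + c.natAbs ≤ k → 3 ≤ a + d →
    a * d - b * c = 1 → GoodM !![a, b; c, d] := by
  intro k
  induction k with
  | zero =>
    intro a b c d hk htr hdet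
    have hb : b = 0 := by omega
    have hc : c = 0 := by omega
    exact good_of_bc_nonneg a b c d htr hdet (by simp [hb])
  | succ k ih =>
    intro a b c d hk htr hdet
    rcases le_or_gt 0 (b * c) with hbc | hbc
    · exact good_of_bc_nonneg a b c d htr hdet hbc
    · rcases lt_or_ge 0 b with hb | hb
      · have hc : c < 0 := by nlinarith
        rcases le_or_gt (-c) b with hcb | hcb
        · exact good_descent k ih a b c d hb hc hcb hk htr hdet
        · apply moveS; apply moveD
          apply good_descent k ih d (-c) (-b) a (by omega) (by omega) (by omega) (by omega)
            (by omega) (by linear_combination hdet)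
      · have hb' : b < 0 := by
          rcases lt_or_eq_of_le hb with h | h
          · exact h
          · exfalso; rw [h] at hbc; simp at hbc
        have hc : 0 < c := by nlinarith
        rcases le_or_gt c (-b) with hcb | hcb
        · apply moveD
          exact good_descent k ih a (-b) (-c) d (by omega) (by omega) (by omega) (by omega)
            htr (by linear_combination hdet)
        · apply moveS
          exact good_descent k ih d c b a hc hb' (by omega) (by omega)
            (by omega) (by linear_combination hdet)

/-- Let `A ∈ SL₂(ℤ)` be loxodromic, i.e. `|tr A| > 2`. Then there exists
`P ∈ GL₂(ℤ)` (a unit of the ring of 2×2 integer matrices) such that either `P A P⁻¹` or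
`P (−A) P⁻¹` has all four entries nonnegative. -/
theorem exists_conj_nonneg_entries (A : Matrix (Fin 2) (Fin 2) ℤ)
    (hdet : A.det = 1) (htr : 2 < |A.trace|) :
    ∃ P : (Matrix (Fin 2) (Fin 2) ℤ)ˣ,
      (∀ i j, 0 ≤ ((P : Matrix (Fin 2) (Fin 2) ℤ) * A * (↑P⁻¹ : Matrix (Fin 2) (Fin 2) ℤ)) i j) ∨
      (∀ i j, 0 ≤ ((P : Matrix (Fin 2) (Fin 2) ℤ) * (-A) * (↑P⁻¹ : Matrix (Fin 2) (Fin 2) ℤ)) i j) := by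
  have htr2 : A.trace = A 0 0 + A 1 1 := Matrix.trace_fin_two A
  have hdet2 : A 0 0 * A 1 1 - A 0 1 * A 1 0 = 1 := by
    rw [← Matrix.det_fin_two]; exact hdet
  rcases lt_abs.1 htr with h | h
  · have hG : GoodM A := by
      rw [Matrix.eta_fin_two A]
      exact good_main ((A 0 1).natAbs + (A 1 0).natAbs) _ _ _ _ le_rfl
        (by rw [htr2] at h; linarith) hdet2
    obtain ⟨P, hP⟩ := hG
    exact ⟨P, Or.inl hP⟩
  · have hneg : -A = !![-(A 0 0), -(A 0 1); -(A 1 0), -(A 1 1)] := by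
      rw [Matrix.eta_fin_two A]
      ext i j
      fin_cases i <;> fin_cases j <;> simp
    have hG : GoodM (-A) := by
      rw [hneg]
      exact good_main ((A 0 1).natAbs + (A 1 0).natAbs) _ _ _ _ (by omega)
        (by rw [htr2] at h; linarith) (by linear_combination hdet2)
    obtain ⟨P, hP⟩ := hG
    exact ⟨P, Or.inr hP⟩
end

section
/- For every integer n there exists a finite set S of matrices in GL₂(ℤ) such that every loxodromic matrix A ∈ GL₂(ℤ) with tr A = n is conjugate in GL₂(ℤ) to an element of S. In other words, for each integer n there are only finitely many GL₂(ℤ)-conjugacy classes of loxodromic elements of trace n. -/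
/-- A matrix in `GL₂(ℤ)` is loxodromic if its spectral radius exceeds 1; equivalently,
either `det A = 1` and `|tr A| > 2`, or `det A = −1` and `tr A ≠ 0`. -/
def IsLoxodromic (A : Matrix (Fin 2) (Fin 2) ℤ) : Prop :=
  (A.det = 1 ∧ 2 < |A.trace|) ∨ (A.det = -1 ∧ A.trace ≠ 0)

namespace LoxAux

abbrev M2 := Matrix (Fin 2) (Fin 2) ℤ

/-- Conjugacy in `GL₂(ℤ)`. -/
def Conj (A B : M2) : Prop := ∃ P : M2ˣ, (P : M2) * A * (↑P⁻¹ : M2) = B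

lemma conj_refl (A : M2) : Conj A A := ⟨1, by simp⟩

lemma conj_trans {A B C : M2} (h1 : Conj A B) (h2 : Conj B C) : Conj A C := by
  obtain ⟨P, rfl⟩ := h1; obtain ⟨Q, rfl⟩ := h2
  exact ⟨Q * P, by simp [Units.val_mul, mul_assoc]⟩

lemma trace_conj {A B : M2} (h : Conj A B) : B.trace = A.trace := by
  obtain ⟨P, rfl⟩ := h
  rw [Matrix.trace_mul_cycle]
  have h1 : (↑P⁻¹ : M2) * ↑P = 1 := by rw [← Units.val_mul]; simp
  rw [h1, one_mul]

lemma det_conj {A B : M2} (h : Conj A B) : B.det = A.det := by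
  obtain ⟨P, rfl⟩ := h
  have h1 : ((P : M2) * ↑P⁻¹).det = 1 := by rw [← Units.val_mul]; simp
  rw [Matrix.det_mul] at h1
  rw [Matrix.det_mul, Matrix.det_mul]
  linear_combination A.det * h1

lemma lox_conj {A B : M2} (h : Conj A B) (hA : IsLoxodromic A) : IsLoxodromic B := by
  unfold IsLoxodromic at *
  rw [trace_conj h, det_conj h]; exact hA

lemma lox_aux {A : M2} (hA : IsLoxodromic A) (h0 : A.det = A 0 0 * A 1 1) : False := by
  have htr : A.trace = A 0 0 + A 1 1 := Matrix.trace_fin_two A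
  rcases hA with ⟨h1, h2⟩ | ⟨h1, h2⟩
  · rw [h0] at h1
    rcases Int.mul_eq_one_iff_eq_one_or_neg_one.mp h1 with ⟨ha, hd⟩ | ⟨ha, hd⟩ <;>
      rw [htr, ha, hd] at h2 <;> norm_num at h2
  · rw [h0] at h1
    have h1' : A 0 0 * (-(A 1 1)) = 1 := by linarith
    rcases Int.mul_eq_one_iff_eq_one_or_neg_one.mp h1' with ⟨ha, hd⟩ | ⟨ha, hd⟩ <;>
      [ (have hd' : A 1 1 = -1 := by linarith) ; (have hd' : A 1 1 = 1 := by linarith) ] <;>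
      rw [htr, ha, hd'] at h2 <;> norm_num at h2

lemma lox_c_ne {A : M2} (h : IsLoxodromic A) : A 1 0 ≠ 0 := fun hc =>
  lox_aux h (by rw [Matrix.det_fin_two, hc]; ring)

lemma lox_b_ne {A : M2} (h : IsLoxodromic A) : A 0 1 ≠ 0 := fun hb =>
  lox_aux h (by rw [Matrix.det_fin_two, hb]; ring)

def shearU (k : ℤ) : M2ˣ :=
  ⟨!![1,k;0,1], !![1,-k;0,1],
   by ext i j; fin_cases i <;> fin_cases j <;> simp [Matrix.mul_apply, Fin.sum_univ_two],
   by ext i j; fin_cases i <;> fin_cases j <;> simp [Matrix.mul_apply, Fin.sum_univ_two]⟩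

def flipU : M2ˣ :=
  ⟨!![1,0;0,-1], !![1,0;0,-1],
   by ext i j; fin_cases i <;> fin_cases j <;> simp [Matrix.mul_apply, Fin.sum_univ_two],
   by ext i j; fin_cases i <;> fin_cases j <;> simp [Matrix.mul_apply, Fin.sum_univ_two]⟩

def swapU : M2ˣ :=
  ⟨!![0,1;1,0], !![0,1;1,0],
   by ext i j; fin_cases i <;> fin_cases j <;> simp [Matrix.mul_apply, Fin.sum_univ_two],
   by ext i j; fin_cases i <;> fin_cases j <;> simp [Matrix.mul_apply, Fin.sum_univ_two]⟩

lemma shear_conj (k : ℤ) (B : M2) :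
    (↑(shearU k) : M2) * B * (↑(shearU k)⁻¹ : M2)
      = !![B 0 0 + k * B 1 0, B 0 1 + k * (B 1 1 - B 0 0) - k * k * B 1 0;
           B 1 0, B 1 1 - k * B 1 0] := by
  show (!![1,k;0,1] : M2) * B * !![1,-k;0,1] = _
  conv_lhs => rw [Matrix.eta_fin_two B]
  ext i j; fin_cases i <;> fin_cases j <;> simp [Matrix.mul_apply, Fin.sum_univ_two] <;> ring

lemma flip_conj (B : M2) :
    (↑flipU : M2) * B * (↑flipU⁻¹ : M2) = !![B 0 0, -(B 0 1); -(B 1 0), B 1 1] := by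
  show (!![1,0;0,-1] : M2) * B * !![1,0;0,-1] = _
  conv_lhs => rw [Matrix.eta_fin_two B]
  ext i j; fin_cases i <;> fin_cases j <;> simp [Matrix.mul_apply, Fin.sum_univ_two]

lemma swap_conj (B : M2) :
    (↑swapU : M2) * B * (↑swapU⁻¹ : M2) = !![B 1 1, B 1 0; B 0 1, B 0 0] := by
  show (!![0,1;1,0] : M2) * B * !![0,1;1,0] = _
  conv_lhs => rw [Matrix.eta_fin_two B]
  ext i j; fin_cases i <;> fin_cases j <;> simp [Matrix.mul_apply, Fin.sum_univ_two]

lemma entry_bounds (n a b c d e : ℤ) (hcpos : 0 < c)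
    (hu1 : -c ≤ 2 * a - n) (hu2 : 2 * a - n ≤ c) (hcb : c ≤ |b|)
    (htr : a + d = n) (hdet : a * d - b * c = e)
    (hD1 : 1 ≤ n ^ 2 - 4 * e) (hD2 : n ^ 2 - 4 * e ≤ n ^ 2 + 4) :
    (-(n ^ 2 + 2 * |n| + 4) ≤ a ∧ a ≤ n ^ 2 + 2 * |n| + 4) ∧
    (-(n ^ 2 + 2 * |n| + 4) ≤ b ∧ b ≤ n ^ 2 + 2 * |n| + 4) ∧
    (-(n ^ 2 + 2 * |n| + 4) ≤ c ∧ c ≤ n ^ 2 + 2 * |n| + 4) ∧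
    (-(n ^ 2 + 2 * |n| + 4) ≤ d ∧ d ≤ n ^ 2 + 2 * |n| + 4) := by
  have key : 4 * (b * c) = n ^ 2 - 4 * e - (2 * a - n) ^ 2 := by
    have hdn : d = n - a := by linarith
    rw [hdn] at hdet
    linear_combination (-4 : ℤ) * hdet
  have hbpos : c ≤ b := by
    rcases le_abs.mp hcb with h | h
    · exact h
    · exfalso; nlinarith [mul_pos hcpos hcpos]
  have hbc : c * c ≤ b * c := mul_le_mul_of_nonneg_right hbpos (le_of_lt hcpos)
  have h4c : 4 * (c * c) ≤ n ^ 2 + 4 := by nlinarith [sq_nonneg (2 * a - n)]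
  have hc2 : c ≤ c * c := by nlinarith
  have habs1 : -|n| ≤ n := neg_abs_le n
  have habs2 : n ≤ |n| := le_abs_self n
  have habs0 : 0 ≤ |n| := abs_nonneg n
  refine ⟨⟨?_, ?_⟩, ⟨?_, ?_⟩, ⟨?_, ?_⟩, ⟨?_, ?_⟩⟩ <;>
    nlinarith [sq_nonneg (2 * a - n)]

end LoxAux

open LoxAux in
set_option maxHeartbeats 1000000 in
/-- For every integer `n` there exists a finite set `S` of matrices in `GL₂(ℤ)`
such that every loxodromic matrix `A ∈ GL₂(ℤ)` with `tr A = n` is conjugate in `GL₂(ℤ)`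
to an element of `S`. -/
theorem finitely_many_conjugacy_classes_of_trace (n : ℤ) :
    ∃ S : Finset (Matrix (Fin 2) (Fin 2) ℤ),
      ∀ A : Matrix (Fin 2) (Fin 2) ℤ, IsLoxodromic A → A.trace = n →
        ∃ B ∈ S, ∃ P : (Matrix (Fin 2) (Fin 2) ℤ)ˣ,
          (P : Matrix (Fin 2) (Fin 2) ℤ) * A * (↑P⁻¹ : Matrix (Fin 2) (Fin 2) ℤ) = B := by
  classical
  set M : ℤ := n ^ 2 + 2 * |n| + 4 with hMdef
  refine ⟨((Finset.Icc (-M) M) ×ˢ (Finset.Icc (-M) M) ×ˢ (Finset.Icc (-M) M) ×ˢ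
      (Finset.Icc (-M) M)).image (fun p => !![p.1, p.2.1; p.2.2.1, p.2.2.2]), ?_⟩
  intro A hlox htr
  have hex : ∃ k : ℕ, ∃ B : M2, Conj A B ∧ (B 1 0).natAbs = k := ⟨_, A, conj_refl A, rfl⟩
  obtain ⟨B₀, hB₀, hB₀m⟩ := Nat.find_spec hex
  have hmin : ∀ B : M2, Conj A B → Nat.find hex ≤ (B 1 0).natAbs :=
    fun B hB => Nat.find_min' hex ⟨B, hB, rfl⟩
  have hc₀ : B₀ 1 0 ≠ 0 := lox_c_ne (lox_conj hB₀ hlox)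
  -- Step 1: a conjugate with positive lower-left entry of minimal absolute value
  obtain ⟨B₁, hB₁, hc₁pos, hc₁abs⟩ :
      ∃ B₁ : M2, Conj A B₁ ∧ 0 < B₁ 1 0 ∧ (B₁ 1 0).natAbs = Nat.find hex := by
    rcases lt_or_gt_of_ne hc₀ with h | h
    · refine ⟨_, conj_trans hB₀ ⟨flipU, flip_conj B₀⟩, ?_, ?_⟩ <;>
        simp [← hB₀m, Int.natAbs_neg]; omega
    · exact ⟨B₀, hB₀, h, hB₀m⟩
  -- Step 2: shear so that |2a - n| ≤ c
  set c : ℤ := B₁ 1 0 with hc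
  obtain ⟨B₂, hB₂, hB₂c, hub1, hub2⟩ :
      ∃ B₂ : M2, Conj A B₂ ∧ B₂ 1 0 = c ∧ -c ≤ 2 * B₂ 0 0 - n ∧ 2 * B₂ 0 0 - n ≤ c := by
    set a₁ : ℤ := B₁ 0 0 with ha₁
    set q : ℤ := (2 * a₁ - n + c) / (2 * c) with hq
    have hr1 : 0 ≤ (2 * a₁ - n + c) % (2 * c) := Int.emod_nonneg _ (by positivity)
    have hr2 : (2 * a₁ - n + c) % (2 * c) < 2 * c := Int.emod_lt_of_pos _ (by positivity)
    have hdivmod : 2 * c * q + (2 * a₁ - n + c) % (2 * c) = 2 * a₁ - n + c :=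
      Int.mul_ediv_add_emod _ _
    refine ⟨_, conj_trans hB₁ ⟨shearU (-q), rfl⟩, ?_, ?_, ?_⟩
    · rw [shear_conj]; simp [hc]
    · rw [shear_conj]
      have : (!![a₁ + -q * c, B₁ 0 1 + -q * (B₁ 1 1 - a₁) - -q * -q * c; c,
          B₁ 1 1 - -q * c] : M2) 0 0 = a₁ + -q * c := by simp
      rw [this]; nlinarith
    · rw [shear_conj]
      have : (!![a₁ + -q * c, B₁ 0 1 + -q * (B₁ 1 1 - a₁) - -q * -q * c; c,
          B₁ 1 1 - -q * c] : M2) 0 0 = a₁ + -q * c := by simp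
      rw [this]; nlinarith
  -- Step 3: minimality gives c ≤ |b|
  have hswap : Conj A ((↑swapU : M2) * B₂ * (↑swapU⁻¹ : M2)) := conj_trans hB₂ ⟨swapU, rfl⟩
  have hminb : Nat.find hex ≤ (B₂ 0 1).natAbs := by
    have := hmin _ hswap
    rwa [swap_conj, show (!![B₂ 1 1, B₂ 1 0; B₂ 0 1, B₂ 0 0] : M2) 1 0 = B₂ 0 1 by simp] at this
  have hcabs : c.natAbs = Nat.find hex := hc₁abs
  have hcleb : c ≤ |B₂ 0 1| := by
    have h1 : (c.natAbs : ℤ) ≤ ((B₂ 0 1).natAbs : ℤ) := by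
      exact_mod_cast hcabs ▸ hminb
    calc c ≤ |c| := le_abs_self c
    _ = (c.natAbs : ℤ) := Int.abs_eq_natAbs c
    _ ≤ ((B₂ 0 1).natAbs : ℤ) := h1
    _ = |B₂ 0 1| := (Int.abs_eq_natAbs _).symm
  -- Arithmetic
  have htr₂ : B₂ 0 0 + B₂ 1 1 = n := by
    have := trace_conj hB₂; rw [htr, Matrix.trace_fin_two] at this; linarith [this]
  have hdet₂ : B₂ 0 0 * B₂ 1 1 - B₂ 0 1 * c = A.det := by
    have := det_conj hB₂; rw [Matrix.det_fin_two, hB₂c] at this; linarith [this]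
  have hcpos : 0 < c := hc₁pos
  have hDle : 1 ≤ n ^ 2 - 4 * A.det ∧ n ^ 2 - 4 * A.det ≤ n ^ 2 + 4 := by
    rcases hlox with ⟨h1, h2⟩ | ⟨h1, h2⟩
    · rw [htr] at h2
      constructor
      · nlinarith [sq_abs n, abs_nonneg n]
      · rw [h1]; linarith
    · rw [h1]; constructor <;> nlinarith [sq_nonneg n]
  obtain ⟨hA', hB', hC', hD'⟩ := entry_bounds n (B₂ 0 0) (B₂ 0 1) c (B₂ 1 1) A.det
    hcpos hub1 hub2 hcleb htr₂ hdet₂ hDle.1 hDle.2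
  refine ⟨B₂, ?_, hB₂⟩
  rw [Finset.mem_image]
  refine ⟨(B₂ 0 0, B₂ 0 1, c, B₂ 1 1), ?_, ?_⟩
  · simp only [Finset.mem_product, Finset.mem_Icc, hMdef]
    exact ⟨hA', hB', hC', hD'⟩
  · exact ((Matrix.eta_fin_two B₂).trans (by rw [hB₂c])).symm
end

section
/- Let k be an algebraically closed field and let A = [[a, b], [c, d]] be a loxodromic matrix in GL₂(ℤ). Then the group homomorphism φ_{A−I} : (kˣ)² → (kˣ)² given by (c₁, c₂) ↦ (c₁^{a−1} c₂^{b}, c₁^{c} c₂^{d−1}) is surjective; that is, for every (d₁, d₂) ∈ (kˣ)² there exists (c₁, c₂) ∈ (kˣ)² with c₁^{a−1} c₂^{b} = d₁ and c₁^{c} c₂^{d−1} = d₂. -/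
lemma exists_units_zpow {k : Type*} [Field k] [IsAlgClosed k] (n : ℤ) (hn : n ≠ 0)
    (u : kˣ) : ∃ v : kˣ, v ^ n = u := by
  have key : ∀ (m : ℤ), 0 < m → ∀ w : kˣ, ∃ v : kˣ, v ^ m = w := by
    intro m hm w
    obtain ⟨z, hz⟩ := IsAlgClosed.exists_pow_nat_eq (w : k) (n := m.toNat) (by omega)
    have hz0 : z ≠ 0 := by
      intro h; rw [h, zero_pow (by omega)] at hz
      exact w.ne_zero hz.symm
    refine ⟨Units.mk0 z hz0, ?_⟩
    have : ((Units.mk0 z hz0) ^ m : kˣ) = ((Units.mk0 z hz0) ^ m.toNat : kˣ) := by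
      rw [← zpow_natCast]; congr 1; omega
    rw [this]
    ext
    simpa using hz
  rcases lt_or_gt_of_ne hn with h | h
  · obtain ⟨v, hv⟩ := key (-n) (by omega) u
    exact ⟨v⁻¹, by rw [inv_zpow, ← zpow_neg, hv]⟩
  · exact key n h u

/-- Let `k` be algebraically closed and `A = [[a,b],[c,d]]` loxodromic in
`GL₂(ℤ)`. Then `φ_{A−I} : (kˣ)² → (kˣ)²`, `(c₁, c₂) ↦ (c₁^{a−1} c₂^{b}, c₁^{c} c₂^{d−1})`,
is surjective. -/
theorem monomial_sub_id_surjective {k : Type*} [Field k] [IsAlgClosed k]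
    (A : Matrix (Fin 2) (Fin 2) ℤ) (hA : IsLoxodromic A) :
    ∀ d₁ d₂ : kˣ, ∃ c₁ c₂ : kˣ,
      c₁ ^ (A 0 0 - 1) * c₂ ^ (A 0 1) = d₁ ∧ c₁ ^ (A 1 0) * c₂ ^ (A 1 1 - 1) = d₂ := by
  intro d₁ d₂
  set a := A 0 0; set b := A 0 1; set c := A 1 0; set d := A 1 1
  have hdet : A.det = a * d - b * c := Matrix.det_fin_two A
  have htr : A.trace = a + d := Matrix.trace_fin_two A
  set n : ℤ := (a - 1) * (d - 1) - b * c with hn_def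
  have hn : n ≠ 0 := by
    rcases hA with ⟨h1, h2⟩ | ⟨h1, h2⟩
    · rw [hdet] at h1; rw [htr] at h2
      have : n = 2 - (a + d) := by rw [hn_def]; linarith
      rw [this]
      rcases lt_abs.mp h2 with h | h <;> omega
    · rw [hdet] at h1; rw [htr] at h2
      have : n = -(a + d) := by rw [hn_def]; linarith
      omega
  obtain ⟨e₁, he₁⟩ := exists_units_zpow n hn d₁
  obtain ⟨e₂, he₂⟩ := exists_units_zpow n hn d₂
  refine ⟨e₁ ^ (d - 1) * e₂ ^ (-b), e₁ ^ (-c) * e₂ ^ (a - 1), ?_, ?_⟩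
  · rw [← he₁, hn_def]
    rw [mul_zpow, mul_zpow, ← zpow_mul, ← zpow_mul, ← zpow_mul, ← zpow_mul,
      mul_mul_mul_comm, ← zpow_add, ← zpow_add]
    have h1 : (d - 1) * (a - 1) + -c * b = (a - 1) * (d - 1) - b * c := by ring
    have h2 : -b * (a - 1) + (a - 1) * b = 0 := by ring
    rw [h1, h2, zpow_zero, mul_one]
  · rw [← he₂, hn_def]
    rw [mul_zpow, mul_zpow, ← zpow_mul, ← zpow_mul, ← zpow_mul, ← zpow_mul,
      mul_mul_mul_comm, ← zpow_add, ← zpow_add]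
    have h1 : (d - 1) * c + -c * (d - 1) = 0 := by ring
    have h2 : -b * c + (a - 1) * (d - 1) = (a - 1) * (d - 1) - b * c := by ring
    rw [h1, h2, zpow_zero, one_mul]
end

section
/- Let A be a loxodromic matrix in GL₂(ℤ) and let Δ be a subgroup of (ℂˣ)² that is invariant under the monomial automorphism φ_A of (ℂˣ)², i.e. φ_A(Δ) = Δ. If there exists a pair of integers (m, n) ≠ (0, 0) such that x^m y^n = 1 for every (x, y) ∈ Δ, then Δ is finite. -/
lemma quad_no_root (t δ u v : ℤ) (hu : u ≠ 0) (h : v^2 - t*u*v + δ*u^2 = 0)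
    (hlox : (δ = 1 ∧ 2 < |t|) ∨ (δ = -1 ∧ t ≠ 0)) : False := by
  have hdvd : u ∣ (2*v - t*u) := by
    have h2 : u^2 ∣ (2*v - t*u)^2 := ⟨t^2 - 4*δ, by linear_combination 4*h⟩
    exact (Int.pow_dvd_pow_iff two_ne_zero).mp h2
  obtain ⟨s, hs⟩ := hdvd
  have hss : s^2 = t^2 - 4*δ := by
    have h2 : u^2 * s^2 = u^2 * (t^2 - 4*δ) := by
      linear_combination 4*h - (2*v - t*u + u*s)*hs
    exact mul_left_cancel₀ (pow_ne_zero 2 hu) h2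
  set T : ℤ := (t.natAbs : ℤ) with hTdef
  set S : ℤ := (s.natAbs : ℤ) with hSdef
  have hT0 : 0 ≤ T := Int.natCast_nonneg _
  have hS0 : 0 ≤ S := Int.natCast_nonneg _
  have hts : S^2 = T^2 - 4*δ := by
    rcases Int.natAbs_eq s with hS | hS <;> rcases Int.natAbs_eq t with hT | hT <;>
      nlinarith [hss]
  rcases hlox with ⟨hδ, ht⟩ | ⟨hδ, ht⟩
  · subst hδ
    have hT3 : 3 ≤ T := by
      have := Int.abs_eq_natAbs t; omega
    have hfac : (T - S) * (T + S) = 4 := by linear_combination -hts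
    have h1 : 0 < T - S := by nlinarith
    have h2 : T - S < 2 := by nlinarith
    have h3 : T - S = 1 := by omega
    rw [h3, one_mul] at hfac
    omega
  · subst hδ
    have hT1 : 1 ≤ T := by
      have : t.natAbs ≠ 0 := Int.natAbs_ne_zero.mpr ht
      omega
    have hS3 : 3 ≤ S := by nlinarith
    have hfac : (S - T) * (S + T) = 4 := by linear_combination hts
    have h1 : 0 < S - T := by nlinarith
    have h2 : S - T < 2 := by nlinarith
    have h3 : S - T = 1 := by omega
    rw [h3, one_mul] at hfac
    omega

lemma det_ne_zero_of_lox (a b c d m n : ℤ)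
    (hlox : (a*d - b*c = 1 ∧ 2 < |a+d|) ∨ (a*d - b*c = -1 ∧ a+d ≠ 0))
    (hmn : m ≠ 0 ∨ n ≠ 0) :
    m * (b*m + d*n) - n * (a*m + c*n) ≠ 0 := by
  intro hD
  rcases hmn with hm | hn
  · refine quad_no_root (a+d) (a*d - b*c) m (a*m + c*n) hm ?_ hlox
    linear_combination (-c) * hD
  · refine quad_no_root (a+d) (a*d - b*c) n (b*m + d*n) hn ?_ hlox
    linear_combination b * hD



/-- Let `A` be loxodromic in `GL₂(ℤ)` and let `Δ ≤ (ℂˣ)²` be invariant under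
the monomial automorphism `φ_A`. If there is `(m, n) ≠ (0, 0)` with `x^m y^n = 1` for all
`(x, y) ∈ Δ`, then `Δ` is finite. -/
theorem finite_of_char_kernel_invariant (A : Matrix (Fin 2) (Fin 2) ℤ)
    (hA : IsLoxodromic A) (Δ : Subgroup (ℂˣ × ℂˣ))
    (hinv : (fun p : ℂˣ × ℂˣ =>
        (p.1 ^ A 0 0 * p.2 ^ A 0 1, p.1 ^ A 1 0 * p.2 ^ A 1 1)) '' (Δ : Set (ℂˣ × ℂˣ))
      = (Δ : Set (ℂˣ × ℂˣ)))
    (hchar : ∃ m n : ℤ, (m, n) ≠ (0, 0) ∧ ∀ p ∈ Δ, p.1 ^ m * p.2 ^ n = 1) :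
    (Δ : Set (ℂˣ × ℂˣ)).Finite := by
  obtain ⟨m, n, hmn, hker⟩ := hchar
  have hmn' : m ≠ 0 ∨ n ≠ 0 := by
    by_contra h; push_neg at h; exact hmn (by simp [h.1, h.2])
  set a := A 0 0 with ha
  set b := A 0 1 with hb
  set c := A 1 0 with hc
  set d := A 1 1 with hd
  have hAtr : A.trace = a + d := by rw [Matrix.trace_fin_two]
  have hAdet : A.det = a*d - b*c := by rw [Matrix.det_fin_two]
  have hlox : (a*d - b*c = 1 ∧ 2 < |a+d|) ∨ (a*d - b*c = -1 ∧ a+d ≠ 0) := by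
    rw [← hAtr, ← hAdet]; exact hA
  -- Δ is stable under φ_A
  have hmem : ∀ p : ℂˣ × ℂˣ, p ∈ Δ → (p.1 ^ a * p.2 ^ b, p.1 ^ c * p.2 ^ d) ∈ Δ := by
    intro p hp
    have : (p.1 ^ a * p.2 ^ b, p.1 ^ c * p.2 ^ d) ∈
        ((fun p : ℂˣ × ℂˣ =>
          (p.1 ^ A 0 0 * p.2 ^ A 0 1, p.1 ^ A 1 0 * p.2 ^ A 1 1)) '' (Δ : Set (ℂˣ × ℂˣ))) :=
      ⟨p, hp, rfl⟩
    rw [hinv] at this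
    exact this
  set m' : ℤ := a*m + c*n with hm'
  set n' : ℤ := b*m + d*n with hn'
  -- second character killing Δ
  have hker' : ∀ p ∈ Δ, p.1 ^ m' * p.2 ^ n' = 1 := by
    intro p hp
    have h1 := hker _ (hmem p hp)
    calc p.1 ^ m' * p.2 ^ n'
        = (p.1 ^ (a*m) * p.1 ^ (c*n)) * (p.2 ^ (b*m) * p.2 ^ (d*n)) := by
          rw [hm', hn', zpow_add, zpow_add]
      _ = (p.1 ^ (a*m) * p.2 ^ (b*m)) * (p.1 ^ (c*n) * p.2 ^ (d*n)) := by
          rw [mul_mul_mul_comm]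
      _ = ((p.1 ^ a) ^ m * (p.2 ^ b) ^ m) * ((p.1 ^ c) ^ n * (p.2 ^ d) ^ n) := by
          rw [zpow_mul, zpow_mul, zpow_mul, zpow_mul]
      _ = (p.1 ^ a * p.2 ^ b) ^ m * (p.1 ^ c * p.2 ^ d) ^ n := by
          rw [mul_zpow, mul_zpow]
      _ = 1 := h1
  set D : ℤ := m * n' - n * m' with hDdef
  have hD : D ≠ 0 := by
    rw [hDdef, hm', hn']
    exact det_ne_zero_of_lox a b c d m n hlox hmn'
  -- every element of Δ satisfies x^D = 1 and y^D = 1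
  have hDpow : ∀ p ∈ Δ, p.1 ^ D = 1 ∧ p.2 ^ D = 1 := by
    intro p hp
    have e1 := hker p hp
    have e2 := hker' p hp
    have e1' : ∀ k : ℤ, (p.1 ^ m) ^ k * (p.2 ^ n) ^ k = 1 := by
      intro k; rw [← mul_zpow, e1, one_zpow]
    have e2' : ∀ k : ℤ, (p.1 ^ m') ^ k * (p.2 ^ n') ^ k = 1 := by
      intro k; rw [← mul_zpow, e2, one_zpow]
    constructor
    · have hx1 : p.1 ^ (m*n') = (p.2 ^ (n*n'))⁻¹ := by
        rw [zpow_mul, zpow_mul]; exact eq_inv_of_mul_eq_one_left (e1' n')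
      have hx2 : p.1 ^ (m'*n) = (p.2 ^ (n'*n))⁻¹ := by
        rw [zpow_mul, zpow_mul]; exact eq_inv_of_mul_eq_one_left (e2' n)
      have : p.1 ^ D = p.1 ^ (m*n') * (p.1 ^ (m'*n))⁻¹ := by
        rw [hDdef, mul_comm n m', zpow_sub]
      rw [this, hx1, hx2, inv_inv, mul_comm n n', inv_mul_cancel]
    · have hy1 : p.2 ^ (n*m') = (p.1 ^ (m*m'))⁻¹ := by
        rw [zpow_mul, zpow_mul]; exact eq_inv_of_mul_eq_one_right (e1' m')
      have hy2 : p.2 ^ (n'*m) = (p.1 ^ (m'*m))⁻¹ := by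
        rw [zpow_mul, zpow_mul]; exact eq_inv_of_mul_eq_one_right (e2' m)
      have hnegD : p.2 ^ (n*m' - n'*m) = 1 := by
        rw [zpow_sub, hy1, hy2, inv_inv, mul_comm m m', inv_mul_cancel]
      have : p.2 ^ D = (p.2 ^ (n*m' - n'*m))⁻¹ := by
        rw [← zpow_neg]; congr 1; ring
      rw [this, hnegD, inv_one]
  -- conclude finiteness via roots of unity
  set k : ℕ := D.natAbs with hk
  have hk0 : k ≠ 0 := Int.natAbs_ne_zero.mpr hD
  haveI : NeZero k := ⟨hk0⟩
  haveI : Finite (rootsOfUnity k ℂ) := inferInstance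
  have hkpow : ∀ p ∈ Δ, p.1 ^ k = 1 ∧ p.2 ^ k = 1 := by
    intro p hp
    obtain ⟨h1, h2⟩ := hDpow p hp
    rcases Int.natAbs_eq D with h | h
    · rw [h, zpow_natCast] at h1 h2; exact ⟨h1, h2⟩
    · rw [h, zpow_neg, zpow_natCast, inv_eq_one] at h1 h2; exact ⟨h1, h2⟩
  apply Set.Finite.subset
    (Set.Finite.prod ((rootsOfUnity k ℂ : Set ℂˣ).toFinite) ((rootsOfUnity k ℂ : Set ℂˣ).toFinite))
  intro p hp
  obtain ⟨h1, h2⟩ := hkpow p hp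
  exact ⟨(mem_rootsOfUnity k p.1).mpr h1, (mem_rootsOfUnity k p.2).mpr h2⟩
end

section
/- For every real number λ ≥ 1 there exists a finite set S of matrices in GL₂(ℤ) such that every loxodromic matrix A ∈ GL₂(ℤ) all of whose complex eigenvalues have absolute value at most λ is conjugate in GL₂(ℤ) to an element of S. -/
section AuxLemmas
open Matrix Polynomial

def MConj (A B : Matrix (Fin 2) (Fin 2) ℤ) : Prop :=
  ∃ P : (Matrix (Fin 2) (Fin 2) ℤ)ˣ,
    (P : Matrix (Fin 2) (Fin 2) ℤ) * A * (↑P⁻¹ : Matrix (Fin 2) (Fin 2) ℤ) = B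

lemma MConj.refl (A : Matrix (Fin 2) (Fin 2) ℤ) : MConj A A :=
  ⟨1, by simp⟩

lemma MConj.trans {A B C : Matrix (Fin 2) (Fin 2) ℤ} (h1 : MConj A B) (h2 : MConj B C) :
    MConj A C := by
  obtain ⟨P, hP⟩ := h1
  obtain ⟨Q, hQ⟩ := h2
  refine ⟨Q * P, ?_⟩
  rw [_root_.mul_inv_rev, Units.val_mul, Units.val_mul]
  rw [← hQ, ← hP]
  noncomm_ring

lemma MConj.trace_eq {A B : Matrix (Fin 2) (Fin 2) ℤ} (h : MConj A B) : B.trace = A.trace := by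
  obtain ⟨P, hP⟩ := h
  rw [← hP, Matrix.trace_units_conj]

lemma MConj.det_eq {A B : Matrix (Fin 2) (Fin 2) ℤ} (h : MConj A B) : B.det = A.det := by
  obtain ⟨P, hP⟩ := h
  rw [← hP, Matrix.det_mul, Matrix.det_mul]
  have : ((P : Matrix (Fin 2) (Fin 2) ℤ) * (↑P⁻¹ : Matrix (Fin 2) (Fin 2) ℤ)).det = 1 := by
    rw [← Units.val_mul, mul_inv_cancel, Units.val_one, Matrix.det_one]
  rw [Matrix.det_mul] at this
  have h2 : (↑P⁻¹ : Matrix (Fin 2) (Fin 2) ℤ).det * (P : Matrix (Fin 2) (Fin 2) ℤ).det = 1 := by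
    linarith [mul_comm (P : Matrix (Fin 2) (Fin 2) ℤ).det (↑P⁻¹ : Matrix (Fin 2) (Fin 2) ℤ).det]
  calc (P : Matrix (Fin 2) (Fin 2) ℤ).det * A.det * (↑P⁻¹ : Matrix (Fin 2) (Fin 2) ℤ).det
      = A.det * ((↑P⁻¹ : Matrix (Fin 2) (Fin 2) ℤ).det * (P : Matrix (Fin 2) (Fin 2) ℤ).det) := by ring
    _ = A.det := by rw [h2, mul_one]

lemma MConj.lox {A B : Matrix (Fin 2) (Fin 2) ℤ} (h : MConj A B) (hA : IsLoxodromic A) :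
    IsLoxodromic B := by
  unfold IsLoxodromic at *
  rw [h.trace_eq, h.det_eq]
  exact hA

lemma lox_c_ne {A : Matrix (Fin 2) (Fin 2) ℤ} (hA : IsLoxodromic A) : A 1 0 ≠ 0 := by
  intro hc
  have hdet := Matrix.det_fin_two A
  have htr := Matrix.trace_fin_two A
  rcases hA with ⟨h1, h2⟩ | ⟨h1, h2⟩
  · have had : A 0 0 * A 1 1 = 1 := by rw [h1, hc] at hdet; linarith
    rcases Int.eq_one_or_neg_one_of_mul_eq_one' had with ⟨u, v⟩ | ⟨u, v⟩ <;>
      rw [htr, u, v] at h2 <;> norm_num at h2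
  · have had : A 0 0 * -(A 1 1) = 1 := by rw [h1, hc] at hdet; linarith
    rcases Int.eq_one_or_neg_one_of_mul_eq_one' had with ⟨u, v⟩ | ⟨u, v⟩ <;>
      apply h2 <;> rw [htr] <;> omega

-- explicit units
def Tunit (n : ℤ) : (Matrix (Fin 2) (Fin 2) ℤ)ˣ :=
  ⟨!![1, n; 0, 1], !![1, -n; 0, 1],
   by rw [Matrix.mul_fin_two]; norm_num [← Matrix.one_fin_two],
   by rw [Matrix.mul_fin_two]; norm_num [← Matrix.one_fin_two]⟩

def Junit : (Matrix (Fin 2) (Fin 2) ℤ)ˣ :=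
  ⟨!![0, 1; 1, 0], !![0, 1; 1, 0],
   by rw [Matrix.mul_fin_two]; norm_num [← Matrix.one_fin_two],
   by rw [Matrix.mul_fin_two]; norm_num [← Matrix.one_fin_two]⟩

lemma T_conj (n a b c d : ℤ) :
    (↑(Tunit n) : Matrix (Fin 2) (Fin 2) ℤ) * !![a, b; c, d] * (↑(Tunit n)⁻¹ : Matrix (Fin 2) (Fin 2) ℤ) =
      !![a + n*c, b + n*(d - a) - n^2*c; c, d - n*c] := by
  show !![1, n; 0, 1] * !![a, b; c, d] * !![1, -n; 0, 1] = _
  rw [Matrix.mul_fin_two, Matrix.mul_fin_two]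
  congr 1 <;> ring_nf

lemma J_conj (a b c d : ℤ) :
    (↑Junit : Matrix (Fin 2) (Fin 2) ℤ) * !![a, b; c, d] * (↑Junit⁻¹ : Matrix (Fin 2) (Fin 2) ℤ) =
      !![d, c; b, a] := by
  show !![0, 1; 1, 0] * !![a, b; c, d] * !![0, 1; 1, 0] = _
  rw [Matrix.mul_fin_two, Matrix.mul_fin_two]
  congr 1 <;> ring_nf

lemma exists_n (c e : ℤ) (hc : c ≠ 0) : ∃ n : ℤ, |e - 2*n*c| ≤ |c| := by
  have key : ∀ c' : ℤ, 0 < c' → ∃ n : ℤ, |e - 2*n*c'| ≤ c' := by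
    intro c' hc'
    have h2 : (0:ℤ) < 2*c' := by linarith
    have hq := Int.mul_ediv_add_emod e (2*c')
    have hr0 := Int.emod_nonneg e (by linarith : (2:ℤ)*c' ≠ 0)
    have hr1 := Int.emod_lt_of_pos e h2
    set q := e / (2*c') with hqdef
    set r := e % (2*c') with hrdef
    by_cases hcase : r ≤ c'
    · exact ⟨q, by rw [abs_le]; constructor <;> linarith⟩
    · exact ⟨q+1, by rw [abs_le]; constructor <;> push_neg at hcase <;> nlinarith⟩
  rcases hc.lt_or_gt with h | h
  · obtain ⟨n, hn⟩ := key (-c) (by linarith)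
    exact ⟨-n, by rw [abs_of_neg h] at *; convert hn using 2; ring⟩
  · obtain ⟨n, hn⟩ := key c h
    exact ⟨n, by rw [abs_of_pos h]; exact hn⟩

lemma charpoly_fin_two' (M : Matrix (Fin 2) (Fin 2) ℂ) :
    M.charpoly = X^2 - C M.trace * X + C M.det := by
  rw [Matrix.charpoly, Matrix.det_fin_two]
  simp [Matrix.charmatrix_apply, Matrix.trace_fin_two, Matrix.det_fin_two]
  ring


set_option maxHeartbeats 1000000 in
lemma reduction (A : Matrix (Fin 2) (Fin 2) ℤ) (hA : IsLoxodromic A) :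
    ∃ B, MConj A B ∧ ∀ i j, |B i j| ≤ A.trace ^ 2 + 4 + |A.trace| := by
  set t := A.trace with ht
  set δ := A.det with hδ
  set D : ℤ := t ^ 2 - 4 * δ with hD
  have hD1 : 1 ≤ D := by
    rcases hA with ⟨h1, h2⟩ | ⟨h1, h2⟩ <;> rw [hD, hδ, h1] <;> rw [← ht] at h2
    · have h3 : 3 ≤ |t| := h2
      nlinarith [sq_abs t, h3]
    · nlinarith [sq_nonneg t]
  have hDK : D ≤ t ^ 2 + 4 := by
    rcases hA with ⟨h1, _⟩ | ⟨h1, _⟩ <;> rw [hD, hδ, h1] <;> linarith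
  -- minimize |c|-entry over the conjugacy class
  set s : Set ℕ := {m | ∃ B, MConj A B ∧ (B 1 0).natAbs = m} with hs
  have hne : s.Nonempty := ⟨(A 1 0).natAbs, A, MConj.refl A, rfl⟩
  obtain ⟨B, hAB, hmB⟩ := Nat.sInf_mem hne
  have hmin : ∀ B', MConj A B' → sInf s ≤ (B' 1 0).natAbs := fun B' h => Nat.sInf_le ⟨B', h, rfl⟩
  set a := B 0 0 with hadef; set b := B 0 1 with hbdef
  set c := B 1 0 with hcdef; set d := B 1 1 with hddef
  have hBlox := hAB.lox hA
  have hc : c ≠ 0 := lox_c_ne hBlox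
  obtain ⟨n, hn⟩ := exists_n c (d - a) hc
  set a' : ℤ := a + n * c with ha'
  set b' : ℤ := b + n * (d - a) - n ^ 2 * c with hb'
  set d' : ℤ := d - n * c with hd'
  set C : Matrix (Fin 2) (Fin 2) ℤ := !![a', b'; c, d'] with hCdef
  have hBC : MConj B C := by
    refine ⟨Tunit n, ?_⟩
    conv_lhs => rw [Matrix.eta_fin_two B]
    rw [T_conj]
  have hAC : MConj A C := hAB.trans hBC
  -- J-conjugate to get lower bound on |b'|
  have hACJ : MConj A !![d', c; b', a'] := hAC.trans ⟨Junit, J_conj a' b' c d'⟩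
  have hYX' : (c).natAbs ≤ (b').natAbs := by
    have h1 := hmin _ hACJ
    have h2 : (!![d', c; b', a'] : Matrix (Fin 2) (Fin 2) ℤ) 1 0 = b' := by simp
    rw [h2] at h1; omega
  have htrB : a + d = t := by
    have h := hAB.trace_eq; rw [Matrix.trace_fin_two] at h; exact h
  have hdetB : a * d - b * c = δ := by
    have h := hAB.det_eq; rw [Matrix.det_fin_two] at h; exact h
  set e : ℤ := d - a - 2 * n * c with he
  have hE : |e| ≤ |c| := hn
  have hkey : e ^ 2 + 4 * (b' * c) = D := by
    rw [hD, he, hb']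
    linear_combination (a + d + t) * htrB - 4 * hdetB
  -- absolute value bookkeeping
  set X := |c| with hX
  set Y := |b'| with hY
  have hX1 : 1 ≤ X := Int.one_le_abs hc
  have hYX : X ≤ Y := by
    rw [hX, hY, Int.abs_eq_natAbs, Int.abs_eq_natAbs]; exact_mod_cast hYX'
  have hY0 : 0 ≤ Y := le_trans (by linarith) hYX
  have hXX : X * X ≤ Y * X := mul_le_mul_of_nonneg_right hYX (by linarith)
  have h1XX : 1 ≤ X * X := le_trans hX1 (by nlinarith)
  have he2 : e ^ 2 ≤ X * X := by
    nlinarith [mul_self_le_mul_self (abs_nonneg e) hE, abs_mul_abs_self e, abs_mul_abs_self c]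
  have habs4 : |4 * (b' * c)| = 4 * (Y * X) := by
    rw [abs_mul, abs_mul, ← hY, ← hX]; norm_num
  have hDe : 4 * (Y * X) = |D - e ^ 2| := by rw [← habs4]; congr 1; linarith
  have hpos : 0 ≤ D - e ^ 2 := by
    by_contra hneg
    push_neg at hneg
    rw [abs_of_neg hneg] at hDe
    linarith
  rw [abs_of_nonneg hpos] at hDe
  have hXXD : X * X ≤ D := by linarith [sq_nonneg e]
  have hXD : X ≤ D := by
    have h5 : X * 1 ≤ X * X := mul_le_mul_of_nonneg_left hX1 (by linarith : (0:ℤ) ≤ X)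
    rw [mul_one] at h5; linarith
  have hYD : Y ≤ D := by
    have h5 : Y * 1 ≤ Y * X := mul_le_mul_of_nonneg_left hX1 hY0
    rw [mul_one] at h5; linarith [sq_nonneg e]
  have hED : |e| ≤ D := le_trans hE hXD
  have ha'bound : |a'| ≤ D + |t| := by
    have h2a : 2 * a' = t - e := by rw [ha', he]; linarith [htrB]
    have h3 : |2 * a'| = 2 * |a'| := by rw [abs_mul]; norm_num
    have h4 : |t - e| ≤ |t| + |e| := abs_sub t e
    rw [← h2a, h3] at h4
    linarith [abs_nonneg t, abs_nonneg a']
  have hd'bound : |d'| ≤ D + |t| := by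
    have h2a : 2 * d' = t + e := by rw [hd', he]; linarith [htrB]
    have h3 : |2 * d'| = 2 * |d'| := by rw [abs_mul]; norm_num
    have h4 : |t + e| ≤ |t| + |e| := abs_add_le t e
    rw [← h2a, h3] at h4
    linarith [abs_nonneg t, abs_nonneg d']
  refine ⟨C, hAC, ?_⟩
  have ht2 : (0:ℤ) ≤ t ^ 2 := sq_nonneg t
  have htabs : (0:ℤ) ≤ |t| := abs_nonneg t
  have g00 : |C 0 0| ≤ t ^ 2 + 4 + |t| := by
    have : C 0 0 = a' := by simp [hCdef]
    rw [this]; linarith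
  have g01 : |C 0 1| ≤ t ^ 2 + 4 + |t| := by
    have : C 0 1 = b' := by simp [hCdef]
    rw [this, ← hY]; linarith
  have g10 : |C 1 0| ≤ t ^ 2 + 4 + |t| := by
    have : C 1 0 = c := by simp [hCdef]
    rw [this, ← hX]; linarith
  have g11 : |C 1 1| ≤ t ^ 2 + 4 + |t| := by
    have : C 1 1 = d' := by simp [hCdef]
    rw [this]; linarith
  intro i j
  fin_cases i <;> fin_cases j
  · exact g00
  · exact g01
  · exact g10
  · exact g11

lemma trace_bound (lam : ℝ) (A : Matrix (Fin 2) (Fin 2) ℤ) (hA : IsLoxodromic A)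
    (hspec : ∀ μ : ℂ, (Matrix.charpoly (A.map (fun x : ℤ => (x : ℂ)))).IsRoot μ →
      ‖μ‖ ≤ lam) :
    (|A.trace| : ℝ) ≤ 2 * lam := by
  set t : ℤ := A.trace with ht
  set δ : ℤ := A.det with hδ
  have htr : (A.map (fun x : ℤ => (x : ℂ))).trace = ((t : ℤ) : ℂ) := by
    rw [Matrix.trace_fin_two, ht, Matrix.trace_fin_two]
    simp [Matrix.map_apply]
  have hdet : (A.map (fun x : ℤ => (x : ℂ))).det = ((δ : ℤ) : ℂ) := by
    rw [Matrix.det_fin_two, hδ, Matrix.det_fin_two]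
    simp [Matrix.map_apply]
  have hcp : (A.map (fun x : ℤ => (x : ℂ))).charpoly
      = Polynomial.X ^ 2 - Polynomial.C ((t : ℤ) : ℂ) * Polynomial.X
        + Polynomial.C ((δ : ℤ) : ℂ) := by
    rw [charpoly_fin_two', htr, hdet]
  set Dr : ℝ := (t : ℝ) ^ 2 - 4 * (δ : ℝ) with hDr
  have hD0 : 0 ≤ Dr := by
    rcases hA with ⟨h1, h2⟩ | ⟨h1, h2⟩ <;> rw [← ht] at h2 <;> rw [hDr, hδ, h1]
    · have h3 : 3 ≤ |t| := h2
      have h4 : (9:ℝ) ≤ (t:ℝ)^2 := by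
        have : (3:ℝ) ≤ |(t:ℝ)| := by rw [← Int.cast_abs]; exact_mod_cast h3
        nlinarith [sq_abs (t:ℝ)]
      push_cast
      linarith
    · push_cast
      nlinarith [sq_nonneg (t:ℝ)]
  set r : ℝ := Real.sqrt Dr with hr
  have hr2 : r ^ 2 = Dr := Real.sq_sqrt hD0
  have hroot : ∀ x : ℝ, x ^ 2 - (t:ℝ) * x + (δ:ℝ) = 0 →
      ‖((x : ℝ) : ℂ)‖ ≤ lam := by
    intro x hx
    apply hspec
    rw [Polynomial.IsRoot, hcp]
    simp only [Polynomial.eval_add, Polynomial.eval_sub, Polynomial.eval_mul,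
      Polynomial.eval_pow, Polynomial.eval_X, Polynomial.eval_C]
    have : ((x:ℂ))^2 - ((t:ℤ):ℂ) * (x:ℂ) + ((δ:ℤ):ℂ)
        = ((x ^ 2 - (t:ℝ) * x + (δ:ℝ) : ℝ) : ℂ) := by push_cast; ring
    rw [this, hx]
    simp
  have h1 : ‖((((t:ℝ) + r) / 2 : ℝ) : ℂ)‖ ≤ lam := by
    apply hroot; rw [hDr] at hr2; nlinarith [hr2]
  have h2 : ‖((((t:ℝ) - r) / 2 : ℝ) : ℂ)‖ ≤ lam := by
    apply hroot; rw [hDr] at hr2; nlinarith [hr2]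
  rw [Complex.norm_real, Real.norm_eq_abs] at h1 h2
  have h3 : |((t:ℝ))| ≤ 2 * lam := by
    have habs : (t:ℝ) = ((t:ℝ) + r) / 2 + ((t:ℝ) - r) / 2 := by ring
    calc |((t:ℝ))| = |((t:ℝ) + r) / 2 + ((t:ℝ) - r) / 2| := by rw [← habs]
      _ ≤ |((t:ℝ) + r) / 2| + |((t:ℝ) - r) / 2| := abs_add_le _ _
      _ ≤ 2 * lam := by linarith
  exact_mod_cast h3


end AuxLemmas

/-- For every real `λ ≥ 1` there is a finite set `S ⊂ GL₂(ℤ)` such that every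
loxodromic `A ∈ GL₂(ℤ)` all of whose complex eigenvalues have absolute value at most `λ`
is conjugate in `GL₂(ℤ)` to an element of `S`. -/
theorem finitely_many_conjugacy_classes_of_bounded_spectrum (lam : ℝ) (hlam : 1 ≤ lam) :
    ∃ S : Finset (Matrix (Fin 2) (Fin 2) ℤ),
      ∀ A : Matrix (Fin 2) (Fin 2) ℤ, IsLoxodromic A →
        (∀ μ : ℂ, (Matrix.charpoly (A.map (fun x : ℤ => (x : ℂ)))).IsRoot μ →
          ‖μ‖ ≤ lam) →
        ∃ B ∈ S, ∃ P : (Matrix (Fin 2) (Fin 2) ℤ)ˣ,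
          (P : Matrix (Fin 2) (Fin 2) ℤ) * A * (↑P⁻¹ : Matrix (Fin 2) (Fin 2) ℤ) = B := by
  set N₀ : ℕ := 2 * ⌈lam⌉₊ with hN₀
  set N : ℤ := (N₀ : ℤ) ^ 2 + 4 + (N₀ : ℤ) with hN
  refine ⟨(Fintype.piFinset fun _ : Fin 2 =>
      Fintype.piFinset fun _ : Fin 2 => Finset.Icc (-N) N).image Matrix.of, ?_⟩
  intro A hA hspec
  obtain ⟨B, hAB, hbound⟩ := reduction A hA
  have htN : |A.trace| ≤ (N₀ : ℤ) := by
    have h1 : (|A.trace| : ℝ) ≤ 2 * lam := trace_bound lam A hA hspec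
    have h2 : (2 : ℝ) * lam ≤ (N₀ : ℝ) := by
      rw [hN₀]; push_cast
      have := Nat.le_ceil lam
      linarith
    exact_mod_cast le_trans h1 h2
  have hsq : A.trace ^ 2 ≤ (N₀ : ℤ) ^ 2 := by
    have h0 := abs_nonneg A.trace
    nlinarith [sq_abs A.trace]
  have hB : ∀ i j, |B i j| ≤ N := by
    intro i j
    have := hbound i j
    rw [hN]
    linarith
  refine ⟨B, ?_, ?_⟩
  · rw [Finset.mem_image]
    refine ⟨fun i j => B i j, ?_, rfl⟩
    rw [Fintype.mem_piFinset]
    intro i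
    rw [Fintype.mem_piFinset]
    intro j
    rw [Finset.mem_Icc]
    have := hB i j
    rw [abs_le] at this
    exact this
  · exact hAB
end

section
/- Let A be a loxodromic matrix in GL₂(ℤ), let n ≥ 1 be an integer, and set B = I + A + A² + ⋯ + A^{n−1}. Then the monomial endomorphism φ_B of (ℂˣ)² given by (x, y) ↦ (x^{B₁₁} y^{B₁₂}, x^{B₂₁} y^{B₂₂}) is surjective. -/
private lemma cayley2 (A : Matrix (Fin 2) (Fin 2) ℤ) :
    A ^ 2 = A.trace • A - A.det • (1 : Matrix (Fin 2) (Fin 2) ℤ) := by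
  ext i j
  fin_cases i <;> fin_cases j <;>
    simp only [pow_two, Matrix.mul_apply, Fin.sum_univ_two, Matrix.trace_fin_two,
      Matrix.det_fin_two, Matrix.sub_apply, Matrix.smul_apply, smul_eq_mul,
      Matrix.one_apply] <;>
    norm_num <;> ring

/-- Representation of powers and geometric sums in terms of `A` and `1`. -/
private lemma rep (A : Matrix (Fin 2) (Fin 2) ℤ) (n : ℕ) :
    ∃ f g a b : ℤ,
      A ^ n = f • A + g • (1 : Matrix (Fin 2) (Fin 2) ℤ) ∧
      (∑ i ∈ Finset.range n, A ^ i) = a • A + b • (1 : Matrix (Fin 2) (Fin 2) ℤ) ∧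
      ∀ x : ℝ, x ^ 2 = (A.trace : ℝ) * x - (A.det : ℝ) →
        x ^ n = (f : ℝ) * x + (g : ℝ) ∧
        ∑ i ∈ Finset.range n, x ^ i = (a : ℝ) * x + (b : ℝ) := by
  induction n with
  | zero =>
    refine ⟨0, 1, 0, 0, by simp, by simp, fun x _ => ⟨by simp, by simp⟩⟩
  | succ m ih =>
    obtain ⟨f, g, a, b, hf, ha, hx⟩ := ih
    refine ⟨f * A.trace + g, -(f * A.det), a + f, b + g, ?_, ?_, fun x hr => ?_⟩
    · calc A ^ (m + 1) = A ^ m * A := pow_succ A m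
        _ = (f • A + g • 1) * A := by rw [hf]
        _ = f • (A ^ 2) + g • A := by
            rw [add_mul, smul_mul_assoc, smul_mul_assoc, one_mul, ← pow_two]
        _ = f • (A.trace • A - A.det • 1) + g • A := by rw [cayley2]
        _ = (f * A.trace + g) • A + (-(f * A.det)) • 1 := by
            rw [smul_sub, smul_smul, smul_smul, add_smul, neg_smul]; abel
    · rw [Finset.sum_range_succ, ha, hf, add_smul, add_smul]; abel
    · obtain ⟨hxm, hxs⟩ := hx x hr
      constructor
      · rw [pow_succ, hxm]; simp only [Int.cast_add, Int.cast_mul, Int.cast_neg]; linear_combination (f : ℝ) * hr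
      · rw [Finset.sum_range_succ, hxs, hxm]; push_cast; ring

/-- The geometric sum of a real root of the characteristic polynomial of a
loxodromic matrix is nonzero. -/
private lemma qroot_ne (A : Matrix (Fin 2) (Fin 2) ℤ) (hA : IsLoxodromic A)
    (n : ℕ) (hn : 1 ≤ n) (r : ℝ)
    (hr : r ^ 2 = (A.trace : ℝ) * r - (A.det : ℝ)) :
    ∑ i ∈ Finset.range n, r ^ i ≠ 0 := by
  intro h
  have hpow : r ^ n = 1 := by
    have hg := geom_sum_mul r n
    rw [h, zero_mul] at hg
    linarith
  have habs : |r| ^ n = 1 := by rw [← abs_pow, hpow, abs_one]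
  have hab1 : |r| = 1 := by
    rcases lt_trichotomy |r| 1 with h1 | h1 | h1
    · have := pow_lt_one₀ (abs_nonneg r) h1 (by omega : n ≠ 0)
      linarith
    · exact h1
    · have := one_lt_pow₀ h1 (by omega : n ≠ 0)
      linarith
  rcases (abs_eq (by norm_num : (0:ℝ) ≤ 1)).mp hab1 with h1 | h1
  · rw [h1] at h
    simp only [one_pow, Finset.sum_const, Finset.card_range, nsmul_eq_mul, mul_one] at h
    have : (n : ℝ) ≠ 0 := Nat.cast_ne_zero.mpr (by omega)
    exact this h
  · rw [h1] at hr
    have htd : (A.trace : ℝ) + (A.det : ℝ) = -1 := by nlinarith [hr]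
    have htdz : A.trace + A.det = -1 := by exact_mod_cast htd
    rcases hA with ⟨hd, ht⟩ | ⟨hd, ht⟩
    · rw [hd] at htdz
      have : A.trace = -2 := by omega
      rw [this] at ht
      norm_num at ht
    · rw [hd] at htdz
      have : A.trace = 0 := by omega
      exact ht this

private lemma exists_zpow_eq (u : ℂˣ) (D : ℤ) (hD : D ≠ 0) : ∃ x : ℂˣ, x ^ D = u := by
  have hm : 0 < D.natAbs := Int.natAbs_pos.mpr hD
  obtain ⟨z, hz⟩ := IsAlgClosed.exists_pow_nat_eq (u : ℂ) hm
  have hz0 : z ≠ 0 := by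
    intro h; rw [h, zero_pow hm.ne'] at hz
    exact (Units.ne_zero u) hz.symm
  have hw : (Units.mk0 z hz0) ^ D.natAbs = u := Units.ext (by simp [hz])
  rcases Int.natAbs_eq D with h | h
  · exact ⟨Units.mk0 z hz0, by rw [h, zpow_natCast, hw]⟩
  · exact ⟨(Units.mk0 z hz0)⁻¹, by rw [h, zpow_neg, inv_zpow, inv_inv, zpow_natCast, hw]⟩

private lemma zpow_comp (x y : ℂˣ) (p q r s c w : ℤ) :
    (x ^ p * y ^ q) ^ c * (x ^ r * y ^ s) ^ w
      = x ^ (p * c + r * w) * y ^ (q * c + s * w) := by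
  rw [mul_zpow, mul_zpow, ← zpow_mul, ← zpow_mul, ← zpow_mul, ← zpow_mul,
    mul_mul_mul_comm, ← zpow_add, ← zpow_add]

/-- Let `A` be loxodromic in `GL₂(ℤ)`, `n ≥ 1`, and
`B = I + A + ⋯ + A^{n−1}`. Then the monomial endomorphism `φ_B` of `(ℂˣ)²` is
surjective. -/
theorem monomial_geom_sum_surjective (A : Matrix (Fin 2) (Fin 2) ℤ)
    (hA : IsLoxodromic A) (n : ℕ) (hn : 1 ≤ n)
    (B : Matrix (Fin 2) (Fin 2) ℤ) (hB : B = ∑ i ∈ Finset.range n, A ^ i) :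
    Function.Surjective (fun p : ℂˣ × ℂˣ =>
      (p.1 ^ B 0 0 * p.2 ^ B 0 1, p.1 ^ B 1 0 * p.2 ^ B 1 1)) := by
  obtain ⟨f, g, a, b, -, ha, hx⟩ := rep A n
  -- the discriminant
  have hs : (0 : ℝ) ≤ (A.trace : ℝ) ^ 2 - 4 * (A.det : ℝ) := by
    rcases hA with ⟨hd, ht⟩ | ⟨hd, ht⟩
    · have h3 : 3 ≤ |A.trace| := ht
      have h9 : 9 ≤ A.trace ^ 2 := by nlinarith [sq_abs A.trace]
      have : (9 : ℝ) ≤ (A.trace : ℝ) ^ 2 := by exact_mod_cast h9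
      rw [hd]; push_cast; linarith
    · rw [hd]; push_cast; nlinarith [sq_nonneg ((A.trace : ℝ))]
  set s : ℝ := (A.trace : ℝ) ^ 2 - 4 * (A.det : ℝ) with hs_def
  have hss : Real.sqrt s ^ 2 = s := Real.sq_sqrt hs
  set lam : ℝ := ((A.trace : ℝ) + Real.sqrt s) / 2 with hlam
  set mu : ℝ := ((A.trace : ℝ) - Real.sqrt s) / 2 with hmu
  have hrl : lam ^ 2 = (A.trace : ℝ) * lam - (A.det : ℝ) := by
    rw [hlam]; linear_combination hss / 4 + hs_def / 4
  have hrm : mu ^ 2 = (A.trace : ℝ) * mu - (A.det : ℝ) := by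
    rw [hmu]; linear_combination hss / 4 + hs_def / 4
  have hql : (a : ℝ) * lam + b ≠ 0 := by
    rw [← (hx lam hrl).2]; exact qroot_ne A hA n hn lam hrl
  have hqm : (a : ℝ) * mu + b ≠ 0 := by
    rw [← (hx mu hrm).2]; exact qroot_ne A hA n hn mu hrm
  have hdetB : B.det = a ^ 2 * A.det + a * b * A.trace + b ^ 2 := by
    rw [hB, ha]
    simp only [Matrix.det_fin_two, Matrix.add_apply, Matrix.smul_apply, smul_eq_mul,
      Matrix.one_apply, Matrix.trace_fin_two]
    norm_num
    ring
  have hdet_real : (B.det : ℝ) = ((a : ℝ) * lam + b) * ((a : ℝ) * mu + b) := by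
    rw [hdetB, hlam, hmu]
    simp only [Int.cast_add, Int.cast_mul, Int.cast_neg, Int.cast_pow]
    linear_combination ((a:ℝ)^2 / 4) * hss + ((a:ℝ)^2 / 4) * hs_def
  have hD : B.det ≠ 0 := by
    intro h
    have h0 : ((a : ℝ) * lam + b) * ((a : ℝ) * mu + b) = 0 := by
      rw [← hdet_real, h]; norm_num
    rcases mul_eq_zero.mp h0 with h' | h'
    · exact hql h'
    · exact hqm h'
  -- surjectivity
  rintro ⟨u, v⟩
  obtain ⟨x, hxu⟩ := exists_zpow_eq u B.det hD
  obtain ⟨y, hyv⟩ := exists_zpow_eq v B.det hD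
  refine ⟨(x ^ B 1 1 * y ^ (-(B 0 1)), x ^ (-(B 1 0)) * y ^ (B 0 0)), ?_⟩
  simp only []
  rw [Prod.mk.injEq]
  constructor
  · rw [zpow_comp]
    have e1 : B 1 1 * B 0 0 + -(B 1 0) * B 0 1 = B.det := by
      rw [Matrix.det_fin_two]; ring
    have e2 : -(B 0 1) * B 0 0 + B 0 0 * B 0 1 = 0 := by ring
    rw [e1, e2, zpow_zero, mul_one, hxu]
  · rw [zpow_comp]
    have e1 : B 1 1 * B 1 0 + -(B 1 0) * B 1 1 = 0 := by ring
    have e2 : -(B 0 1) * B 1 0 + B 0 0 * B 1 1 = B.det := by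
      rw [Matrix.det_fin_two]; ring
    rw [e1, e2, zpow_zero, one_mul, hyv]
end
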